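/- Let 0 < p < q < 1 be real, let a, b be complex numbers, and let z be a complex number with Re z > 0. Define f(a, b, z) = ((-z, -q/z; q)_∞ / log(1/q)) · ∫_0^∞ (b t, a/t; p)_∞ / ((-z t, -q/(z t); q)_∞) dt/t. Then f satisfies the functional equation f(a, b, z) = f(a p, b, z) - a · f(a p, b, z/q). -/

import Mathlib

set_option maxHeartbeats 1000000

open MeasureTheory Filter Set

/-- The infinite q-Pochhammer symbol `(a; q)_∞ = ∏_{k=0}^∞ (1 - a q^k)`. -/
noncomputable def qPoch (a q : ℂ) : ℂ := ∏' k : ℕ, (1 - a * q ^ k)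

/-- `f(a,b,z) = ((-z, -q/z; q)_∞ / log(1/q)) ∫_0^∞ (bt, a/t; p)_∞ / (-zt, -q/(zt); q)_∞ dt/t`. -/
noncomputable def f (p q : ℝ) (a b z : ℂ) : ℂ :=
  (qPoch (-z) q * qPoch (-(q : ℂ) / z) q) / ((Real.log (1 / q) : ℝ) : ℂ) *
    ∫ t in Set.Ioi (0 : ℝ),
      (qPoch (b * (t : ℂ)) p * qPoch (a / (t : ℂ)) p) /
        (qPoch (-z * (t : ℂ)) q * qPoch (-(q : ℂ) / (z * (t : ℂ))) q) / (t : ℂ)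

/-- Auxiliary real infinite product. -/
noncomputable def RP (x r : ℝ) : ℝ := ∏' k : ℕ, (1 + x * r ^ k)

lemma aux_one_add_ne {w : ℂ} (hw : 0 < w.re) : (1 : ℂ) + w ≠ 0 := by
  intro h
  have := congrArg Complex.re h
  simp only [Complex.add_re, Complex.one_re, Complex.zero_re] at this
  linarith

lemma aux_mult_one_add {g : ℕ → ℂ} (hg : Summable g) : Multipliable (fun k => 1 + g k) := by
  by_cases h : ∀ k, 1 + g k ≠ 0
  · have hm := Complex.multipliable_one_add_of_summable hg
    have h2 : ∀ᶠ k in cofinite, ‖Complex.log (1 + g k)‖ ≤ 3 / 2 * ‖g k‖ := by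
      rw [Nat.cofinite_eq_atTop]
      have hggg : Tendsto (fun k => ‖g k‖) atTop (nhds 0) := by
        simpa using hg.tendsto_atTop_zero.norm
      filter_upwards [hggg.eventually_le_const (by norm_num : (0:ℝ) < 1/2)] with k hk
      exact Complex.norm_log_one_add_half_le_self hk
    exact hm
  · push_neg at h
    obtain ⟨k0, hk0⟩ := h
    refine ⟨0, ?_⟩
    have hev : ∀ᶠ s : Finset ℕ in atTop, ∏ i ∈ s, (1 + g i) = 0 :=
      eventually_atTop.2 ⟨{k0}, fun s hs => Finset.prod_eq_zero
        (hs (Finset.mem_singleton_self k0)) hk0⟩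
    exact Tendsto.congr' (by filter_upwards [hev] with s h using h.symm) tendsto_const_nhds

lemma aux_summable_geo (c : ℂ) {r : ℝ} (hr0 : 0 < r) (hr1 : r < 1) :
    Summable (fun k : ℕ => -c * (r : ℂ) ^ k) :=
  (summable_geometric_of_norm_lt_one (by
    rw [Complex.norm_real]; rwa [Real.norm_eq_abs, abs_of_pos hr0])).mul_left (-c)

lemma aux_mult_qPoch (c : ℂ) {r : ℝ} (hr0 : 0 < r) (hr1 : r < 1) :
    Multipliable (fun k : ℕ => 1 - c * (r : ℂ) ^ k) :=
  (aux_mult_one_add (aux_summable_geo c hr0 hr1)).congr fun k => by ring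

lemma aux_mult_RP {x : ℝ} (hx : 0 ≤ x) {r : ℝ} (hr0 : 0 < r) (hr1 : r < 1) :
    Multipliable (fun k : ℕ => 1 + x * r ^ k) := by
  refine ((aux_mult_qPoch (-(x:ℂ)) hr0 hr1).norm).congr fun k => ?_
  have h1 : (1 : ℂ) - (-(x:ℂ)) * (r:ℂ) ^ k = ((1 + x * r ^ k : ℝ) : ℂ) := by push_cast; ring
  rw [h1, Complex.norm_real, Real.norm_eq_abs, abs_of_pos (by positivity)]

lemma aux_qPoch_shift (c : ℂ) {r : ℝ} (hr0 : 0 < r) (hr1 : r < 1) :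
    qPoch c r = (1 - c) * qPoch (c * r) r := by
  have h1 : Multipliable (fun k : ℕ => 1 - c * (r:ℂ) ^ (k + 1)) :=
    (aux_mult_qPoch (c * r) hr0 hr1).congr fun k => by ring
  unfold qPoch
  rw [tprod_eq_zero_mul' (f := fun k : ℕ => 1 - c * (r:ℂ) ^ k) h1]
  simp only [pow_zero, mul_one]
  congr 1
  exact tprod_congr fun k => by ring

lemma aux_RP_shift {x : ℝ} (hx : 0 ≤ x) {r : ℝ} (hr0 : 0 < r) (hr1 : r < 1) :
    RP x r = (1 + x) * RP (x * r) r := by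
  have h1 : Multipliable (fun k : ℕ => 1 + x * r ^ (k + 1)) :=
    (aux_mult_RP (by positivity : (0:ℝ) ≤ x * r) hr0 hr1).congr fun k => by ring
  unfold RP
  rw [tprod_eq_zero_mul' (f := fun k : ℕ => 1 + x * r ^ k) h1]
  simp only [pow_zero, mul_one]
  congr 1
  exact tprod_congr fun k => by ring

lemma aux_tprod_le {f g : ℕ → ℝ} (h0 : ∀ i, 0 ≤ f i) (h : ∀ i, f i ≤ g i)
    (hf : Multipliable f) (hg : Multipliable g) : ∏' i, f i ≤ ∏' i, g i :=
  le_of_tendsto_of_tendsto' hf.hasProd hg.hasProd fun s =>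
    Finset.prod_le_prod (fun i _ => h0 i) (fun i _ => h i)

lemma aux_one_le_tprod {f : ℕ → ℝ} (h : ∀ i, 1 ≤ f i) (hf : Multipliable f) :
    1 ≤ ∏' i, f i := by
  simpa using aux_tprod_le (f := fun _ => (1:ℝ)) (fun _ => zero_le_one) h multipliable_one hf

lemma aux_one_le_RP {x : ℝ} (hx : 0 ≤ x) {r : ℝ} (hr0 : 0 < r) (hr1 : r < 1) :
    1 ≤ RP x r :=
  aux_one_le_tprod (fun k => by nlinarith [pow_pos hr0 k, mul_nonneg hx (pow_pos hr0 k).le])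
    (aux_mult_RP hx hr0 hr1)

lemma aux_norm_qPoch_le (c : ℂ) {r : ℝ} (hr0 : 0 < r) (hr1 : r < 1) :
    ‖qPoch c r‖ ≤ RP ‖c‖ r := by
  rw [qPoch, Multipliable.norm_tprod (aux_mult_qPoch c hr0 hr1)]
  refine aux_tprod_le (fun k => norm_nonneg _) (fun k => ?_)
    ((aux_mult_qPoch c hr0 hr1).norm) (aux_mult_RP (norm_nonneg c) hr0 hr1)
  calc ‖1 - c * (r:ℂ) ^ k‖ ≤ ‖(1:ℂ)‖ + ‖c * (r:ℂ) ^ k‖ := norm_sub_le _ _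
    _ = 1 + ‖c‖ * r ^ k := by
        rw [norm_one, norm_mul, norm_pow, Complex.norm_real, Real.norm_eq_abs,
          abs_of_pos hr0]

lemma aux_RP_le_norm_qPoch {v : ℂ} {x : ℝ} (hx : 0 ≤ x) (hvx : x ≤ v.re)
    {r : ℝ} (hr0 : 0 < r) (hr1 : r < 1) :
    RP x r ≤ ‖qPoch (-v) r‖ := by
  rw [qPoch, Multipliable.norm_tprod (aux_mult_qPoch (-v) hr0 hr1)]
  refine aux_tprod_le (fun k => by positivity) (fun k => ?_)
    (aux_mult_RP hx hr0 hr1) ((aux_mult_qPoch (-v) hr0 hr1).norm)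
  have h1 : (1:ℂ) - (-v) * (r:ℂ) ^ k = 1 + ((r ^ k : ℝ) : ℂ) * v := by push_cast; ring
  have h2 : ((1:ℂ) + ((r ^ k : ℝ):ℂ) * v).re = 1 + r ^ k * v.re := by
    rw [Complex.add_re, Complex.one_re, Complex.re_ofReal_mul]
  calc 1 + x * r ^ k ≤ 1 + r ^ k * v.re := by
        have : 0 ≤ (r:ℝ) ^ k := by positivity
        nlinarith
    _ = ((1:ℂ) + ((r ^ k : ℝ):ℂ) * v).re := h2.symm
    _ ≤ ‖(1:ℂ) + ((r ^ k : ℝ):ℂ) * v‖ := by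
        exact Complex.re_le_norm _
    _ = ‖1 - (-v) * (r:ℂ) ^ k‖ := by rw [h1]

lemma aux_measurable_qPoch {r : ℝ} (hr0 : 0 < r) (hr1 : r < 1) {c : ℝ → ℂ}
    (hc : Measurable c) : Measurable fun t => qPoch (c t) r := by
  have hlim : ∀ t, Tendsto (fun n => ∏ k ∈ Finset.range n, (1 - c t * (r:ℂ) ^ k)) atTop
      (nhds (qPoch (c t) r)) :=
    fun t => (aux_mult_qPoch (c t) hr0 hr1).hasProd.tendsto_prod_nat
  exact measurable_of_tendsto_metrizable
    (fun n => Finset.measurable_prod _ fun k _ =>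
      measurable_const.sub (hc.mul measurable_const))
    (tendsto_pi_nhds.2 hlim)

/-- basic comparison: `RP (β*s) p ≤ C * RP (α₀*s) q`. -/
lemma aux_compare₀ {β α₀ p q : ℝ} (hβ : 0 ≤ β) (hα₀ : 0 < α₀) (hp : 0 < p) (hpq : p < q)
    (hq : q < 1) : ∃ C : ℝ, 0 ≤ C ∧ ∀ s : ℝ, 0 < s → RP (β * s) p ≤ C * RP (α₀ * s) q := by
  have hq0 : 0 < q := hp.trans hpq
  set m : ℕ → ℝ := fun k => max 1 (β / α₀ * (p / q) ^ k) with hm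
  have hpq1 : 0 < p / q := by positivity
  have hpq2 : p / q < 1 := (div_lt_one hq0).2 hpq
  have hev : ∀ᶠ k in atTop, m k = 1 := by
    have : Tendsto (fun k : ℕ => β / α₀ * (p / q) ^ k) atTop (nhds 0) := by
      simpa using (tendsto_pow_atTop_nhds_zero_of_lt_one hpq1.le hpq2).const_mul (β / α₀)
    filter_upwards [this.eventually_le_const (by norm_num : (0:ℝ) < 1)] with k hk
    exact max_eq_left hk
  obtain ⟨K, hK⟩ := eventually_atTop.1 hev
  have hmmult : Multipliable m :=
    multipliable_of_ne_finset_one (s := Finset.range K) fun k hk =>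
      hK k (le_of_not_gt (fun h => hk (Finset.mem_range.2 h)))
  refine ⟨∏' k, m k, le_trans zero_le_one (aux_one_le_tprod (fun k => le_max_left _ _) hmmult),
    fun s hs => ?_⟩
  have hmulq : Multipliable (fun k : ℕ => 1 + α₀ * s * q ^ k) :=
    aux_mult_RP (by positivity) hq0 hq
  have hterm : ∀ k : ℕ, 1 + β * s * p ^ k ≤ m k * (1 + α₀ * s * q ^ k) := by
    intro k
    have hu : 0 ≤ β * s * p ^ k := by positivity
    have hv : 0 < α₀ * s * q ^ k := by positivity
    rcases le_or_gt (β * s * p ^ k) (α₀ * s * q ^ k) with hle | hlt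
    · have h1 : (1:ℝ) ≤ m k := le_max_left _ _
      nlinarith
    · have hratio : β * s * p ^ k / (α₀ * s * q ^ k) = β / α₀ * (p / q) ^ k := by
        rw [div_pow]; field_simp
      have h2 : β / α₀ * (p / q) ^ k ≤ m k := le_max_right _ _
      have h3 : 1 + β * s * p ^ k ≤ β * s * p ^ k / (α₀ * s * q ^ k) * (1 + α₀ * s * q ^ k) := by
        rw [div_mul_eq_mul_div, le_div_iff₀ hv]
        nlinarith
      calc 1 + β * s * p ^ k ≤ β / α₀ * (p / q) ^ k * (1 + α₀ * s * q ^ k) := by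
            rw [← hratio]; exact h3
        _ ≤ m k * (1 + α₀ * s * q ^ k) := by nlinarith
  calc RP (β * s) p ≤ ∏' k, (m k * (1 + α₀ * s * q ^ k)) :=
        aux_tprod_le (fun k => by positivity) hterm (aux_mult_RP (by positivity) hp
          (hpq.trans hq)) (hmmult.mul hmulq)
    _ = (∏' k, m k) * RP (α₀ * s) q := Multipliable.tprod_mul hmmult hmulq
    _ ≤ _ := le_refl _

/-- refined comparison with two reserved factors. -/
lemma aux_compare {β α' p q : ℝ} (hβ : 0 ≤ β) (hα' : 0 < α') (hp : 0 < p) (hpq : p < q)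
    (hq : q < 1) : ∃ K : ℝ, 0 ≤ K ∧ ∀ s : ℝ, 0 < s →
      RP (β * s) p * ((1 + α' * s) * (1 + α' * s * q)) ≤ K * RP (α' * s) q := by
  have hq0 : 0 < q := hp.trans hpq
  obtain ⟨C, hC0, hC⟩ := aux_compare₀ hβ (by positivity : 0 < α' * q * q) hp hpq hq
  refine ⟨C, hC0, fun s hs => ?_⟩
  have h1 : RP (α' * s) q = (1 + α' * s) * ((1 + α' * s * q) * RP (α' * s * q * q) q) := by
    rw [aux_RP_shift (by positivity) hq0 hq, aux_RP_shift (by positivity) hq0 hq]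
  have h2 : α' * q * q * s = α' * s * q * q := by ring
  have h3 := hC s hs
  rw [h2] at h3
  have hpos1 : (0:ℝ) < 1 + α' * s := by positivity
  have hpos2 : (0:ℝ) < 1 + α' * s * q := by positivity
  have hRPpos : 0 ≤ RP (β * s) p :=
    le_trans zero_le_one (aux_one_le_RP (by positivity) hp (hpq.trans hq))
  calc RP (β * s) p * ((1 + α' * s) * (1 + α' * s * q))
      ≤ C * RP (α' * s * q * q) q * ((1 + α' * s) * (1 + α' * s * q)) :=
        mul_le_mul_of_nonneg_right h3 (by positivity)
    _ = C * RP (α' * s) q := by rw [h1]; ring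

/-- integrability of the majorant. -/
lemma aux_int_major {α γ : ℝ} (hα : 0 < α) (hγ : 0 < γ) (c : ℝ) :
    IntegrableOn (fun t : ℝ => c / ((1 + α * t) * (t + γ))) (Ioi 0) volume := by
  have hmeas : Measurable fun t : ℝ => c / ((1 + α * t) * (t + γ)) := by
    apply Measurable.div measurable_const
    exact ((measurable_const.add (measurable_const.mul measurable_id)).mul
      (measurable_id.add measurable_const))
  have h1 : IntegrableOn (fun t : ℝ => c / ((1 + α * t) * (t + γ))) (Ioc 0 1) volume := by
    apply Measure.integrableOn_of_bounded (M := |c| / γ) (by simp [measure_Ioc_lt_top.ne])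
      hmeas.aestronglyMeasurable
    rw [ae_restrict_iff' measurableSet_Ioc]
    refine ae_of_all _ fun t ht => ?_
    have ht0 := ht.1
    have h6 : 0 < α * t := mul_pos hα ht0
    have hd : γ ≤ (1 + α * t) * (t + γ) := by nlinarith
    have hd0 : 0 < (1 + α * t) * (t + γ) := by nlinarith
    rw [Real.norm_eq_abs, abs_div, abs_of_pos hd0]
    exact div_le_div₀ (abs_nonneg c) (le_refl _) hγ hd
  have h2 : IntegrableOn (fun t : ℝ => c / ((1 + α * t) * (t + γ))) (Ioi 1) volume := by
    have hint : IntegrableOn (fun t : ℝ => |c| / α * t ^ (-2 : ℝ)) (Ioi 1) volume :=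
      (integrableOn_Ioi_rpow_of_lt (by norm_num) zero_lt_one).const_mul _
    apply hint.integrable.mono hmeas.aestronglyMeasurable
    rw [ae_restrict_iff' measurableSet_Ioi]
    refine ae_of_all _ fun t ht => ?_
    have ht1 : (1:ℝ) < t := ht
    have ht0 : (0:ℝ) < t := lt_trans zero_lt_one ht1
    have h6 : 0 < α * t := mul_pos hα ht0
    have hd0 : 0 < (1 + α * t) * (t + γ) := by nlinarith
    have hrp : t ^ (-2:ℝ) = (t * t)⁻¹ := by
      rw [show (-2:ℝ) = -(2:ℕ) by norm_num, Real.rpow_neg ht0.le, Real.rpow_natCast]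
      norm_num [sq]
    have h5 : α * (t * t) ≤ (1 + α * t) * (t + γ) := by nlinarith
    rw [Real.norm_eq_abs, Real.norm_eq_abs, abs_div, abs_of_pos hd0,
      abs_of_nonneg (by positivity : (0:ℝ) ≤ |c| / α * t ^ (-2:ℝ)), hrp, div_le_iff₀ hd0]
    calc |c| = |c| / α * (t*t)⁻¹ * (α * (t * t)) := by field_simp
      _ ≤ |c| / α * (t*t)⁻¹ * ((1 + α * t) * (t + γ)) :=
          mul_le_mul_of_nonneg_left h5 (by positivity)
  have := h1.union h2
  rwa [Ioc_union_Ioi_eq_Ioi zero_le_one] at this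

/-- the integrand of `f`. -/
noncomputable def Iab (p q : ℝ) (a b z : ℂ) : ℝ → ℂ := fun t =>
  (qPoch (b * (t : ℂ)) p * qPoch (a / (t : ℂ)) p) /
    (qPoch (-z * (t : ℂ)) q * qPoch (-(q : ℂ) / (z * (t : ℂ))) q) / (t : ℂ)

lemma aux_inv_re_pos {z : ℂ} (hz : 0 < z.re) : 0 < z⁻¹.re := by
  have hzne : z ≠ 0 := fun h => by simp [h] at hz
  rw [Complex.inv_re]
  exact div_pos hz (Complex.normSq_pos.2 hzne)

lemma aux_Ia_split (p q : ℝ) (hp : 0 < p) (hp1 : p < 1) (a b z : ℂ) {t : ℝ} (ht : 0 < t) :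
    Iab p q a b z t = Iab p q (a * (p : ℂ)) b z t - a * (Iab p q (a * (p : ℂ)) b z t / (t : ℂ)) := by
  have htC : (t : ℂ) ≠ 0 := by exact_mod_cast ht.ne'
  have hsplit : qPoch (a / (t : ℂ)) p = (1 - a / (t : ℂ)) * qPoch (a * (p : ℂ) / (t : ℂ)) p := by
    have h := aux_qPoch_shift (a / (t : ℂ)) hp hp1
    rw [show a / (t : ℂ) * (p : ℂ) = a * (p : ℂ) / (t : ℂ) by ring] at h
    exact h
  unfold Iab
  rw [hsplit]
  ring

lemma aux_J_eq (p q : ℝ) (hq0 : 0 < q) (hq : q < 1) (a b z : ℂ) (hz : 0 < z.re)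
    {t : ℝ} (ht : 0 < t) :
    (1 + z / (q : ℂ)) * Iab p q a b (z / (q : ℂ)) t
      = (1 + (q : ℂ) / z) * (Iab p q a b z t / (t : ℂ)) := by
  have htC : (t : ℂ) ≠ 0 := by exact_mod_cast ht.ne'
  have hqC : (q : ℂ) ≠ 0 := by exact_mod_cast hq0.ne'
  have hzne : z ≠ 0 := fun h => by simp [h] at hz
  have hzinv : 0 < z⁻¹.re := aux_inv_re_pos hz
  -- nonzeroness
  have hw1 : z * (t : ℂ) / (q : ℂ) = ((t / q : ℝ) : ℂ) * z := by push_cast; ring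
  have hne1 : (1 : ℂ) + z * (t : ℂ) / (q : ℂ) ≠ 0 := by
    refine aux_one_add_ne ?_
    rw [hw1, Complex.re_ofReal_mul]; positivity
  have hw2 : (q : ℂ) / (z * (t : ℂ)) = ((q / t : ℝ) : ℂ) * z⁻¹ := by
    push_cast; rw [div_eq_mul_inv, mul_inv]; ring
  have hne2 : (1 : ℂ) + (q : ℂ) / (z * (t : ℂ)) ≠ 0 := by
    refine aux_one_add_ne ?_
    rw [hw2, Complex.re_ofReal_mul]; positivity
  -- rewrite the shifted qPochs
  have hA' : qPoch (-(z / (q : ℂ)) * (t : ℂ)) q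
      = (1 + z * (t : ℂ) / (q : ℂ)) * qPoch (-z * (t : ℂ)) q := by
    have h := aux_qPoch_shift (-(z / (q : ℂ)) * (t : ℂ)) hq0 hq
    rw [show -(z / (q : ℂ)) * (t : ℂ) * (q : ℂ) = -z * (t : ℂ) by field_simp,
      show (1 : ℂ) - -(z / (q : ℂ)) * (t : ℂ) = 1 + z * (t : ℂ) / (q : ℂ) by ring] at h
    exact h
  have hB' : -(q : ℂ) / (z / (q : ℂ) * (t : ℂ)) = -(q : ℂ) * (q : ℂ) / (z * (t : ℂ)) := by
    field_simp
  have hB2 : qPoch (-(q : ℂ) / (z * (t : ℂ))) q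
      = (1 + (q : ℂ) / (z * (t : ℂ))) * qPoch (-(q : ℂ) * (q : ℂ) / (z * (t : ℂ))) q := by
    have h := aux_qPoch_shift (-(q : ℂ) / (z * (t : ℂ))) hq0 hq
    rw [show -(q : ℂ) / (z * (t : ℂ)) * (q : ℂ) = -(q : ℂ) * (q : ℂ) / (z * (t : ℂ)) by ring,
      show (1 : ℂ) - -(q : ℂ) / (z * (t : ℂ)) = 1 + (q : ℂ) / (z * (t : ℂ)) by ring] at h
    exact h
  have hne3 : (1 : ℂ) + z / (q : ℂ) ≠ 0 := by
    refine aux_one_add_ne ?_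
    rw [show z / (q : ℂ) = ((1 / q : ℝ) : ℂ) * z by push_cast; ring, Complex.re_ofReal_mul]
    positivity
  have hne4 : (1 : ℂ) + (q : ℂ) / z ≠ 0 := by
    refine aux_one_add_ne ?_
    rw [show (q : ℂ) / z = ((q : ℝ) : ℂ) * z⁻¹ by rw [div_eq_mul_inv], Complex.re_ofReal_mul]
    positivity
  unfold Iab
  rw [hA', hB', hB2]
  obtain ⟨N, hN⟩ : ∃ N, qPoch (b * (t : ℂ)) p * qPoch (a / (t : ℂ)) p = N := ⟨_, rfl⟩
  obtain ⟨A, hA⟩ : ∃ A, qPoch (-z * (t : ℂ)) q = A := ⟨_, rfl⟩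
  obtain ⟨B, hB⟩ : ∃ B, qPoch (-(q : ℂ) * (q : ℂ) / (z * (t : ℂ))) q = B := ⟨_, rfl⟩
  obtain ⟨c₁, hc₁⟩ : ∃ c, (1 : ℂ) + z * (t : ℂ) / (q : ℂ) = c := ⟨_, rfl⟩
  obtain ⟨c₂, hc₂⟩ : ∃ c, (1 : ℂ) + (q : ℂ) / (z * (t : ℂ)) = c := ⟨_, rfl⟩
  rw [hc₁] at hne1
  rw [hc₂] at hne2
  rw [hN, hA, hB, hc₁, hc₂]
  have key : (1 + z / (q : ℂ)) / (c₁ * (t : ℂ)) = (1 + (q : ℂ) / z) / (c₂ * (t : ℂ) * (t : ℂ)) := by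
    rw [← hc₁, ← hc₂, div_eq_div_iff (by exact mul_ne_zero (hc₁ ▸ hne1) htC)
      (by exact mul_ne_zero (mul_ne_zero (hc₂ ▸ hne2) htC) htC)]
    field_simp
    ring
  calc (1 + z / (q : ℂ)) * (N / (c₁ * A * B) / (t : ℂ))
      = ((1 + z / (q : ℂ)) / (c₁ * (t : ℂ))) * (N / (A * B)) := by ring
    _ = ((1 + (q : ℂ) / z) / (c₂ * (t : ℂ) * (t : ℂ))) * (N / (A * B)) := by rw [key]
    _ = (1 + (q : ℂ) / z) * (N / (A * (c₂ * B)) / (t : ℂ) / (t : ℂ)) := by ring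

lemma aux_integrable (p q : ℝ) (hp : 0 < p) (hpq : p < q) (hq : q < 1) (a b z : ℂ)
    (hz : 0 < z.re) :
    IntegrableOn (Iab p q a b z) (Ioi 0) volume ∧
      IntegrableOn (fun t => Iab p q a b z t / (t : ℂ)) (Ioi 0) volume := by
  have hq0 : (0 : ℝ) < q := hp.trans hpq
  have hp1 : p < 1 := hpq.trans hq
  have hzne : z ≠ 0 := fun h => by simp [h] at hz
  have hzinv : 0 < z⁻¹.re := aux_inv_re_pos hz
  set α := z.re with hα
  set γ := q * z⁻¹.re with hγdef
  have hγ : 0 < γ := by positivity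
  obtain ⟨K₁, hK₁0, hK₁⟩ := aux_compare (norm_nonneg b) hz hp hpq hq
  obtain ⟨K₂, hK₂0, hK₂⟩ := aux_compare (norm_nonneg a) hγ hp hpq hq
  -- measurability
  have hmeas : Measurable (Iab p q a b z) := by
    unfold Iab
    apply Measurable.div
    apply Measurable.div
    · exact (aux_measurable_qPoch hp hp1 (measurable_const.mul Complex.measurable_ofReal)).mul
        (aux_measurable_qPoch hp hp1 (measurable_const.div Complex.measurable_ofReal))
    · exact (aux_measurable_qPoch hq0 hq ((measurable_const.mul Complex.measurable_ofReal))).mul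
        (aux_measurable_qPoch hq0 hq
          (measurable_const.div (measurable_const.mul Complex.measurable_ofReal)))
    · exact Complex.measurable_ofReal
  -- the two pointwise bounds
  have hbound : ∀ t ∈ Ioi (0:ℝ),
      ‖Iab p q a b z t‖ ≤ (K₁ * K₂) / ((1 + α * t) * (t + γ)) ∧
      ‖Iab p q a b z t / (t : ℂ)‖ ≤ (K₁ * K₂ / (γ * q)) / ((1 + α * t) * (t + γ)) := by
    intro t ht
    have ht0 : (0 : ℝ) < t := ht
    have htinv : (0 : ℝ) < 1 / t := by positivity
    set X₁ := RP (‖b‖ * t) p with hX₁def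
    set X₂ := RP (‖a‖ * (1 / t)) p with hX₂def
    set Y₁ := RP (α * t) q with hY₁def
    set Y₂ := RP (γ * (1 / t)) q with hY₂def
    have hX₁1 : (1:ℝ) ≤ X₁ := aux_one_le_RP (by positivity) hp hp1
    have hX₂1 : (1:ℝ) ≤ X₂ := aux_one_le_RP (by positivity) hp hp1
    have hY₁1 : (1:ℝ) ≤ Y₁ := aux_one_le_RP (by positivity) hq0 hq
    have hY₂1 : (1:ℝ) ≤ Y₂ := aux_one_le_RP (by positivity) hq0 hq
    have hX₁0 : (0:ℝ) ≤ X₁ := zero_le_one.trans hX₁1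
    have hX₂0 : (0:ℝ) ≤ X₂ := zero_le_one.trans hX₂1
    -- numerator bounds
    have hnb : ‖qPoch (b * (t : ℂ)) p‖ ≤ X₁ := by
      have h := aux_norm_qPoch_le (b * (t : ℂ)) hp hp1
      rwa [show ‖b * (t : ℂ)‖ = ‖b‖ * t by
        rw [norm_mul, Complex.norm_real, Real.norm_eq_abs, abs_of_pos ht0]] at h
    have hna : ‖qPoch (a / (t : ℂ)) p‖ ≤ X₂ := by
      have h := aux_norm_qPoch_le (a / (t : ℂ)) hp hp1
      rwa [show ‖a / (t : ℂ)‖ = ‖a‖ * (1 / t) by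
        rw [norm_div, Complex.norm_real, Real.norm_eq_abs, abs_of_pos ht0,
          div_eq_mul_inv, one_div]] at h
    -- denominator bounds
    have hdA : Y₁ ≤ ‖qPoch (-z * (t : ℂ)) q‖ := by
      have hre : α * t ≤ (z * (t : ℂ)).re := by
        rw [mul_comm z ((t : ℂ)), Complex.re_ofReal_mul, mul_comm]
      have h := aux_RP_le_norm_qPoch (v := z * (t : ℂ)) (by positivity) hre hq0 hq
      rwa [show -(z * (t : ℂ)) = -z * (t : ℂ) by ring] at h
    have hdB : Y₂ ≤ ‖qPoch (-(q : ℂ) / (z * (t : ℂ))) q‖ := by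
      have hw2 : (q : ℂ) / (z * (t : ℂ)) = ((q / t : ℝ) : ℂ) * z⁻¹ := by
        push_cast; rw [div_eq_mul_inv, mul_inv]; ring
      have hre : γ * (1 / t) ≤ ((q : ℂ) / (z * (t : ℂ))).re := by
        rw [hw2, Complex.re_ofReal_mul, hγdef]
        apply le_of_eq; field_simp
      have h := aux_RP_le_norm_qPoch (v := (q : ℂ) / (z * (t : ℂ))) (by positivity) hre hq0 hq
      rwa [show -((q : ℂ) / (z * (t : ℂ))) = -(q : ℂ) / (z * (t : ℂ)) by ring] at h
    have hc₁ := hK₁ t ht0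
    have hc₂ := hK₂ (1 / t) htinv
    rw [← hX₁def, ← hY₁def] at hc₁
    rw [← hX₂def, ← hY₂def] at hc₂
    -- assemble
    have hposαt : (0:ℝ) < 1 + α * t := by positivity
    have hposαtq : (1:ℝ) ≤ 1 + α * t * q := by nlinarith [mul_pos (mul_pos hz ht0) hq0]
    have hposγt : (0:ℝ) < 1 + γ * (1 / t) := by positivity
    have hposγtq : (1:ℝ) ≤ 1 + γ * (1 / t) * q := by nlinarith [mul_pos (mul_pos hγ htinv) hq0]
    have s1 : X₁ * (1 + α * t) ≤ K₁ * Y₁ := by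
      calc X₁ * (1 + α * t) ≤ X₁ * (1 + α * t) * (1 + α * t * q) :=
            le_mul_of_one_le_right (by positivity) hposαtq
        _ = X₁ * ((1 + α * t) * (1 + α * t * q)) := by ring
        _ ≤ K₁ * Y₁ := hc₁
    have s2 : X₂ * (1 + γ * (1 / t)) ≤ K₂ * Y₂ := by
      calc X₂ * (1 + γ * (1 / t)) ≤ X₂ * (1 + γ * (1 / t)) * (1 + γ * (1 / t) * q) :=
            le_mul_of_one_le_right (by positivity) hposγtq
        _ = X₂ * ((1 + γ * (1 / t)) * (1 + γ * (1 / t) * q)) := by ring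
        _ ≤ K₂ * Y₂ := hc₂
    set nN := ‖qPoch (b * (t : ℂ)) p * qPoch (a / (t : ℂ)) p‖ with hnN
    set dD := ‖qPoch (-z * (t : ℂ)) q * qPoch (-(q : ℂ) / (z * (t : ℂ))) q‖ with hdD
    have hNle : nN ≤ X₁ * X₂ := by
      rw [hnN, norm_mul]
      exact mul_le_mul hnb hna (norm_nonneg _) hX₁0
    have hDge : Y₁ * Y₂ ≤ dD := by
      rw [hdD, norm_mul]
      exact mul_le_mul hdA hdB (zero_le_one.trans hY₂1) (norm_nonneg _)
    have hdD0 : (0:ℝ) < dD :=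
      lt_of_lt_of_le (by nlinarith [hY₁1, hY₂1]) hDge
    have hnN0 : (0:ℝ) ≤ nN := norm_nonneg _
    have hnorm1 : ‖Iab p q a b z t‖ = nN / dD / t := by
      unfold Iab
      rw [norm_div, norm_div, Complex.norm_real, Real.norm_eq_abs, abs_of_pos ht0]
    have e0 : t + γ = (1 + γ * (1 / t)) * t := by field_simp
    have hposD : (0:ℝ) < (1 + α * t) * (t + γ) := by positivity
    constructor
    · rw [hnorm1, div_div, div_le_div_iff₀ (by positivity) hposD]
      calc nN * ((1 + α * t) * (t + γ))
          ≤ (X₁ * X₂) * ((1 + α * t) * (t + γ)) :=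
            mul_le_mul_of_nonneg_right hNle hposD.le
        _ = (X₁ * (1 + α * t)) * (X₂ * (1 + γ * (1 / t))) * t := by rw [e0]; ring
        _ ≤ (K₁ * Y₁) * (K₂ * Y₂) * t := by
            refine mul_le_mul_of_nonneg_right ?_ ht0.le
            exact mul_le_mul s1 s2 (mul_nonneg hX₂0 hposγt.le) (mul_nonneg hK₁0 (by linarith))
        _ = K₁ * K₂ * ((Y₁ * Y₂) * t) := by ring
        _ ≤ K₁ * K₂ * (dD * t) := by
            refine mul_le_mul_of_nonneg_left ?_ (mul_nonneg hK₁0 hK₂0)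
            exact mul_le_mul_of_nonneg_right hDge ht0.le
    · have hnorm2 : ‖Iab p q a b z t / (t : ℂ)‖ = nN / dD / t / t := by
        rw [norm_div, hnorm1, Complex.norm_real, Real.norm_eq_abs, abs_of_pos ht0]
      rw [hnorm2, div_div, div_div, div_le_div_iff₀ (by positivity) hposD,
        div_mul_eq_mul_div, le_div_iff₀ (by positivity : (0:ℝ) < γ * q)]
      show nN * ((1 + α * t) * (t + γ)) * (γ * q) ≤ K₁ * K₂ * (dD * (t * t))
      have hg1 : γ * q ≤ (1 + γ * (1 / t) * q) * t := by
        have : (1 + γ * (1 / t) * q) * t = t + γ * q := by field_simp; try ring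
        rw [this]; linarith
      calc nN * ((1 + α * t) * (t + γ)) * (γ * q)
          ≤ (X₁ * X₂) * ((1 + α * t) * (t + γ)) * (γ * q) := by
            refine mul_le_mul_of_nonneg_right ?_ (by positivity)
            exact mul_le_mul_of_nonneg_right hNle hposD.le
        _ ≤ (X₁ * X₂) * ((1 + α * t) * (t + γ)) * ((1 + γ * (1 / t) * q) * t) :=
            mul_le_mul_of_nonneg_left hg1
              (mul_nonneg (mul_nonneg hX₁0 hX₂0) hposD.le)
        _ = (X₁ * (1 + α * t)) * (X₂ * ((1 + γ * (1 / t)) * (1 + γ * (1 / t) * q))) * (t * t) := by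
            rw [e0]; ring
        _ ≤ (K₁ * Y₁) * (K₂ * Y₂) * (t * t) := by
            refine mul_le_mul_of_nonneg_right ?_ (by positivity)
            refine mul_le_mul s1 hc₂ ?_ (mul_nonneg hK₁0 (by linarith))
            have h1 : (0:ℝ) ≤ (1 + γ * (1 / t)) * (1 + γ * (1 / t) * q) := by positivity
            exact mul_nonneg hX₂0 h1
        _ = K₁ * K₂ * ((Y₁ * Y₂) * (t * t)) := by ring
        _ ≤ K₁ * K₂ * (dD * (t * t)) := by
            refine mul_le_mul_of_nonneg_left ?_ (mul_nonneg hK₁0 hK₂0)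
            exact mul_le_mul_of_nonneg_right hDge (by positivity)
  constructor
  · refine MeasureTheory.Integrable.mono (aux_int_major hz hγ (K₁ * K₂))
      hmeas.aestronglyMeasurable ?_
    rw [ae_restrict_iff' measurableSet_Ioi]
    refine ae_of_all _ fun t ht => ?_
    exact le_trans (hbound t ht).1 (le_abs_self _)
  · refine MeasureTheory.Integrable.mono (aux_int_major hz hγ (K₁ * K₂ / (γ * q)))
      ((hmeas.div Complex.measurable_ofReal).aestronglyMeasurable) ?_
    rw [ae_restrict_iff' measurableSet_Ioi]
    refine ae_of_all _ fun t ht => ?_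
    exact le_trans (hbound t ht).2 (le_abs_self _)

theorem stmt_3 (p q : ℝ) (hp : 0 < p) (hpq : p < q) (hq : q < 1)
    (a b z : ℂ) (hz : 0 < z.re) :
    f p q a b z = f p q (a * (p : ℂ)) b z - a * f p q (a * (p : ℂ)) b (z / (q : ℂ)) := by
  have hq0 : (0 : ℝ) < q := hp.trans hpq
  have hp1 : p < 1 := hpq.trans hq
  have hqC : (q : ℂ) ≠ 0 := by exact_mod_cast hq0.ne'
  have hzne : z ≠ 0 := fun h => by simp [h] at hz
  have hzinv := aux_inv_re_pos hz
  have hzq : 0 < (z / (q : ℂ)).re := by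
    rw [show z / (q : ℂ) = ((1 / q : ℝ) : ℂ) * z by push_cast; ring, Complex.re_ofReal_mul]
    positivity
  have hf1 : f p q a b z = (qPoch (-z) q * qPoch (-(q : ℂ) / z) q) /
      ((Real.log (1 / q) : ℝ) : ℂ) * ∫ t in Ioi (0 : ℝ), Iab p q a b z t := rfl
  have hf2 : f p q (a * (p : ℂ)) b z = (qPoch (-z) q * qPoch (-(q : ℂ) / z) q) /
      ((Real.log (1 / q) : ℝ) : ℂ) * ∫ t in Ioi (0 : ℝ), Iab p q (a * (p : ℂ)) b z t := rfl
  have hf3 : f p q (a * (p : ℂ)) b (z / (q : ℂ)) =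
      (qPoch (-(z / (q : ℂ))) q * qPoch (-(q : ℂ) / (z / (q : ℂ))) q) /
      ((Real.log (1 / q) : ℝ) : ℂ) *
        ∫ t in Ioi (0 : ℝ), Iab p q (a * (p : ℂ)) b (z / (q : ℂ)) t := rfl
  obtain ⟨hint1, hint2⟩ := aux_integrable p q hp hpq hq (a * (p : ℂ)) b z hz
  have hIa : (∫ t in Ioi (0 : ℝ), Iab p q a b z t)
      = (∫ t in Ioi (0 : ℝ), Iab p q (a * (p : ℂ)) b z t)
        - a * ∫ t in Ioi (0 : ℝ), Iab p q (a * (p : ℂ)) b z t / (t : ℂ) := by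
    rw [setIntegral_congr_fun measurableSet_Ioi
      (fun t ht => aux_Ia_split p q hp hp1 a b z ht)]
    rw [integral_sub hint1 (hint2.const_mul a), integral_const_mul]
  have hJ : (1 + z / (q : ℂ)) * ∫ t in Ioi (0 : ℝ), Iab p q (a * (p : ℂ)) b (z / (q : ℂ)) t
      = (1 + (q : ℂ) / z) * ∫ t in Ioi (0 : ℝ), Iab p q (a * (p : ℂ)) b z t / (t : ℂ) := by
    rw [← integral_const_mul, ← integral_const_mul]
    exact setIntegral_congr_fun measurableSet_Ioi
      (fun t ht => aux_J_eq p q hq0 hq (a * (p : ℂ)) b z hz ht)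
  have hpre1 : qPoch (-(z / (q : ℂ))) q = (1 + z / (q : ℂ)) * qPoch (-z) q := by
    have h := aux_qPoch_shift (-(z / (q : ℂ))) hq0 hq
    rw [show -(z / (q : ℂ)) * (q : ℂ) = -z by field_simp,
      show (1 : ℂ) - -(z / (q : ℂ)) = 1 + z / (q : ℂ) by ring] at h
    exact h
  have hpre2 : -(q : ℂ) / (z / (q : ℂ)) = -(q : ℂ) * (q : ℂ) / z := div_div_eq_mul_div _ _ _
  have hpre3 : qPoch (-(q : ℂ) / z) q = (1 + (q : ℂ) / z) * qPoch (-(q : ℂ) * (q : ℂ) / z) q := by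
    have h := aux_qPoch_shift (-(q : ℂ) / z) hq0 hq
    rw [show -(q : ℂ) / z * (q : ℂ) = -(q : ℂ) * (q : ℂ) / z by ring,
      show (1 : ℂ) - -(q : ℂ) / z = 1 + (q : ℂ) / z by ring] at h
    exact h
  rw [hf1, hf2, hf3, hpre1, hpre2, hpre3, hIa]
  linear_combination (a * qPoch (-z) q * qPoch (-(q : ℂ) * (q : ℂ) / z) q /
    ((Real.log (1 / q) : ℝ) : ℂ)) * hJ
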